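/- The set of triples (S, L, H) with S unitary on 𝔥⊗𝔎, L : 𝔥 → 𝔥⊗𝔎 bounded, H self-adjoint on 𝔥, equipped with the operation (S₂,L₂,H₂) ◁ (S₁,L₁,H₁) = (S₂S₁, L₂ + S₂L₁, H₁ + H₂ + (L₂†S₂L₁ - L₁†S₂†L₂)/(2i)), forms a group with identity (I, 0, 0) and inverse (S, L, H)⁻¹ = (S†, -S†L, -H). -/

import Mathlib

open Matrix

/-- A Hudson–Parthasarathy triple `(S, L, H)`: an operator `S` on `𝔥⊗𝔎` (a `q×q`
matrix), an operator `L : 𝔥 → 𝔥⊗𝔎` (a `q×p` matrix), and an operator `H` on `𝔥`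
(a `p×p` matrix). -/
abbrev HPTriple (p q : ℕ) :=
  Matrix (Fin q) (Fin q) ℂ × Matrix (Fin q) (Fin p) ℂ × Matrix (Fin p) (Fin p) ℂ

/-- The series product
`(S₂,L₂,H₂) ◁ (S₁,L₁,H₁) = (S₂S₁, L₂ + S₂L₁, H₁ + H₂ + (L₂†S₂L₁ - L₁†S₂†L₂)/(2i))`. -/
noncomputable def tripleOp {p q : ℕ} (g₂ g₁ : HPTriple p q) : HPTriple p q :=
  ⟨g₂.1 * g₁.1, g₂.2.1 + g₂.1 * g₁.2.1,
   g₁.2.2 + g₂.2.2 +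
     (2 * Complex.I)⁻¹ • (g₂.2.1ᴴ * g₂.1 * g₁.2.1 - g₁.2.1ᴴ * g₂.1ᴴ * g₂.2.1)⟩

/-- A triple `(S, L, H)` with `S` unitary and `H` self-adjoint. -/
def IsHP {p q : ℕ} (g : HPTriple p q) : Prop :=
  g.1 ∈ Matrix.unitaryGroup (Fin q) ℂ ∧ g.2.2ᴴ = g.2.2

/-!
Each group law is a direct matrix computation. Beyond ring arithmetic it uses only
`SᴴS = SSᴴ = 1` and the fact that `(X - Xᴴ)/(2i)` is self-adjoint, which keeps the
third component self-adjoint.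
-/

lemma star_two_mul_I_inv : star (2 * Complex.I)⁻¹ = -(2 * Complex.I)⁻¹ := by
  simp [Complex.inv_I, mul_comm]

/-- The correction term of the series product has this form, with `X = L₂ᴴ S₂ L₁`. -/
lemma conjTranspose_smul_sub_conjTranspose {n : Type*} (X : Matrix n n ℂ) :
    ((2 * Complex.I)⁻¹ • (X - Xᴴ))ᴴ = (2 * Complex.I)⁻¹ • (X - Xᴴ) := by
  rw [conjTranspose_smul, conjTranspose_sub, conjTranspose_conjTranspose, star_two_mul_I_inv,
    neg_smul, ← smul_neg, neg_sub]

namespace IsHP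

variable {p q : ℕ} {g : HPTriple p q}

lemma conjTranspose_mul_self (hg : IsHP g) : g.1ᴴ * g.1 = 1 :=
  mem_unitaryGroup_iff'.mp hg.1

lemma mul_conjTranspose_self (hg : IsHP g) : g.1 * g.1ᴴ = 1 :=
  mem_unitaryGroup_iff.mp hg.1

end IsHP

section SeriesProduct

variable {p q : ℕ}

def tripleInv (g : HPTriple p q) : HPTriple p q :=
  ⟨g.1ᴴ, -(g.1ᴴ * g.2.1), -g.2.2⟩

lemma IsHP.tripleOp {g₂ g₁ : HPTriple p q} (h₂ : IsHP g₂) (h₁ : IsHP g₁) :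
    IsHP (tripleOp g₂ g₁) := by
  refine ⟨mul_mem h₂.1 h₁.1, ?_⟩
  have hX : g₁.2.1ᴴ * g₂.1ᴴ * g₂.2.1 = (g₂.2.1ᴴ * g₂.1 * g₁.2.1)ᴴ := by
    simp only [conjTranspose_mul, conjTranspose_conjTranspose, Matrix.mul_assoc]
  simp only [_root_.tripleOp, conjTranspose_add, h₁.2, h₂.2, hX,
    conjTranspose_smul_sub_conjTranspose]

/-- Associativity only needs the outermost `S` to be an isometry: the cross term
`L₂ᴴ S₃ᴴ S₃ S₂ L₁` must collapse to `L₂ᴴ S₂ L₁`. -/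
lemma tripleOp_assoc (g₃ g₂ g₁ : HPTriple p q) (h₃ : g₃.1ᴴ * g₃.1 = 1) :
    tripleOp (tripleOp g₃ g₂) g₁ = tripleOp g₃ (tripleOp g₂ g₁) := by
  obtain ⟨S₃, L₃, H₃⟩ := g₃
  obtain ⟨S₂, L₂, H₂⟩ := g₂
  obtain ⟨S₁, L₁, H₁⟩ := g₁
  have cancel : ∀ {m : ℕ} (B : Matrix (Fin q) (Fin m) ℂ), S₃ᴴ * (S₃ * B) = B := fun B => by
    rw [← Matrix.mul_assoc, h₃, Matrix.one_mul]
  refine Prod.ext (Matrix.mul_assoc _ _ _) (Prod.ext ?_ ?_)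
  · simp only [tripleOp, Matrix.mul_add, Matrix.mul_assoc, add_assoc]
  · simp only [tripleOp, conjTranspose_add, conjTranspose_mul, smul_sub, smul_add,
      Matrix.mul_add, Matrix.add_mul, Matrix.mul_assoc, cancel]
    abel

lemma tripleOp_one (g : HPTriple p q) : tripleOp g ⟨1, 0, 0⟩ = g := by
  simp [tripleOp]

lemma one_tripleOp (g : HPTriple p q) : tripleOp ⟨1, 0, 0⟩ g = g := by
  simp [tripleOp]

lemma IsHP.tripleInv {g : HPTriple p q} (hg : IsHP g) : IsHP (tripleInv g) :=
  ⟨Unitary.star_mem hg.1, by simp [_root_.tripleInv, hg.2]⟩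

lemma tripleOp_tripleInv (g : HPTriple p q) (h : g.1 * g.1ᴴ = 1) :
    tripleOp g (tripleInv g) = ⟨1, 0, 0⟩ := by
  simp [tripleOp, tripleInv, ← Matrix.mul_assoc, h]

lemma tripleInv_tripleOp (g : HPTriple p q) (h : g.1ᴴ * g.1 = 1) :
    tripleOp (tripleInv g) g = ⟨1, 0, 0⟩ := by
  simp [tripleOp, tripleInv, ← Matrix.mul_assoc, h]

end SeriesProduct

/-- The triples `(S, L, H)` with `S` unitary and `H` self-adjoint form a group under the
series product, with identity `(I, 0, 0)` and inverse `(S,L,H)⁻¹ = (S†, -S†L, -H)`. -/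
theorem hpTriple_group {p q : ℕ} :
    (∀ g₂ g₁ : HPTriple p q, IsHP g₂ → IsHP g₁ → IsHP (tripleOp g₂ g₁)) ∧
    (∀ g₃ g₂ g₁ : HPTriple p q, IsHP g₃ → IsHP g₂ → IsHP g₁ →
        tripleOp (tripleOp g₃ g₂) g₁ = tripleOp g₃ (tripleOp g₂ g₁)) ∧
    (∀ g : HPTriple p q, IsHP g → tripleOp g ⟨1, 0, 0⟩ = g) ∧
    (∀ g : HPTriple p q, IsHP g → tripleOp ⟨1, 0, 0⟩ g = g) ∧
    (∀ g : HPTriple p q, IsHP g → IsHP ⟨g.1ᴴ, -(g.1ᴴ * g.2.1), -g.2.2⟩) ∧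
    (∀ g : HPTriple p q, IsHP g →
        tripleOp g ⟨g.1ᴴ, -(g.1ᴴ * g.2.1), -g.2.2⟩ = ⟨1, 0, 0⟩) ∧
    (∀ g : HPTriple p q, IsHP g →
        tripleOp ⟨g.1ᴴ, -(g.1ᴴ * g.2.1), -g.2.2⟩ g = ⟨1, 0, 0⟩) :=
  ⟨fun _ _ h₂ h₁ => h₂.tripleOp h₁,
   fun g₃ g₂ g₁ h₃ _ _ => tripleOp_assoc g₃ g₂ g₁ h₃.conjTranspose_mul_self,
   fun g _ => tripleOp_one g,
   fun g _ => one_tripleOp g,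
   fun _ hg => hg.tripleInv,
   fun g hg => tripleOp_tripleInv g hg.mul_conjTranspose_self,
   fun g hg => tripleInv_tripleOp g hg.conjTranspose_mul_self⟩
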